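/- Fix q ≥ 0 and r > 0. Define κ : (0,∞) → ℝ by κ(Z) = [(X² + XY − 2Y²)Z² + (−2X²Y + XY²)Z + X²Y²] / (2·X^{3/2}·Y^{3/2}·Z^{3/2}), where X = Z + q + r and Y = Z + r. Then κ(Z) → +∞ as Z → 0⁺; in particular κ is unbounded on (0,∞). -/

import Mathlib

/-!
The numerator of `κ` is continuous with value `(q + r)² r² > 0` at `Z = 0`, while the
denominator is continuous, vanishes at `Z = 0` and is positive for `Z > 0`; so the quotient
tends to `+∞` as `Z → 0⁺`.
-/

noncomputable section

/-- The sectional curvature `κ_{q,r}(V₀,V₁)` on the leaf `N_{q,r}`, as a function of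
`Z = ‖a₃‖²`, with `X = Z + q + r` and `Y = Z + r`:
`κ(Z) = [(X² + XY − 2Y²)Z² + (−2X²Y + XY²)Z + X²Y²] / (2·(√X)³·(√Y)³·(√Z)³)`. -/
def kappa (q r Z : ℝ) : ℝ :=
  (((Z + q + r) ^ 2 + (Z + q + r) * (Z + r) - 2 * (Z + r) ^ 2) * Z ^ 2 +
      ((-2) * (Z + q + r) ^ 2 * (Z + r) + (Z + q + r) * (Z + r) ^ 2) * Z +
      (Z + q + r) ^ 2 * (Z + r) ^ 2) /
    (2 * Real.sqrt (Z + q + r) ^ 3 * Real.sqrt (Z + r) ^ 3 * Real.sqrt Z ^ 3)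

open Filter Set Topology

theorem Filter.Tendsto.pos_div_nhdsGT_zero {𝕜 α : Type*} [Semifield 𝕜] [LinearOrder 𝕜]
    [IsStrictOrderedRing 𝕜] [TopologicalSpace 𝕜] [OrderTopology 𝕜] {l : Filter α}
    {f g : α → 𝕜} {C : 𝕜} (hC : 0 < C) (hf : Tendsto f l (𝓝 C)) (hg : Tendsto g l (𝓝[>] 0)) :
    Tendsto (fun x => f x / g x) l atTop := by
  simpa only [div_eq_mul_inv, Pi.inv_apply] using hf.pos_mul_atTop hC hg.inv_tendsto_nhdsGT_zero

theorem Filter.Tendsto.not_bddAbove_image {α β : Type*} [Preorder β] [NoMaxOrder β]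
    {l : Filter α} [l.NeBot] {f : α → β} {s : Set α} (h : Tendsto f l atTop) (hs : s ∈ l) :
    ¬BddAbove (f '' s) := by
  rintro ⟨M, hM⟩
  obtain ⟨x, hxs, hx⟩ := (Filter.Eventually.and hs (h.eventually_gt_atTop M)).exists
  exact (hM (mem_image_of_mem f hxs)).not_gt hx

def kappaNum (q r Z : ℝ) : ℝ :=
  ((Z + q + r) ^ 2 + (Z + q + r) * (Z + r) - 2 * (Z + r) ^ 2) * Z ^ 2 +
    ((-2) * (Z + q + r) ^ 2 * (Z + r) + (Z + q + r) * (Z + r) ^ 2) * Z +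
    (Z + q + r) ^ 2 * (Z + r) ^ 2

def kappaDen (q r Z : ℝ) : ℝ :=
  2 * Real.sqrt (Z + q + r) ^ 3 * Real.sqrt (Z + r) ^ 3 * Real.sqrt Z ^ 3

theorem kappa_eq_div (q r : ℝ) : kappa q r = fun Z => kappaNum q r Z / kappaDen q r Z := rfl

theorem tendsto_kappaNum (q r : ℝ) :
    Tendsto (kappaNum q r) (𝓝[>] 0) (𝓝 ((q + r) ^ 2 * r ^ 2)) := by
  have hcont : Continuous (kappaNum q r) := by unfold kappaNum; fun_prop
  exact (hcont.tendsto' 0 _ (by simp [kappaNum])).mono_left nhdsWithin_le_nhds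

theorem kappaDen_pos {q r Z : ℝ} (hq : 0 ≤ q) (hr : 0 < r) (hZ : 0 < Z) :
    0 < kappaDen q r Z := by
  have hX : 0 < Real.sqrt (Z + q + r) := Real.sqrt_pos.2 (by linarith)
  have hY : 0 < Real.sqrt (Z + r) := Real.sqrt_pos.2 (by linarith)
  have hZ' : 0 < Real.sqrt Z := Real.sqrt_pos.2 hZ
  unfold kappaDen
  positivity

theorem tendsto_kappaDen {q r : ℝ} (hq : 0 ≤ q) (hr : 0 < r) :
    Tendsto (kappaDen q r) (𝓝[>] 0) (𝓝[>] 0) := by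
  have hcont : Continuous (kappaDen q r) := by unfold kappaDen; fun_prop
  refine tendsto_nhdsWithin_of_tendsto_nhds_of_eventually_within _ ?_ ?_
  · exact (hcont.tendsto' 0 0 (by simp [kappaDen])).mono_left nhdsWithin_le_nhds
  · filter_upwards [self_mem_nhdsWithin] with Z hZ using kappaDen_pos hq hr hZ

/-- On a type-2 leaf (`r > 0`), the sectional curvature `κ(V₀,V₁)` blows up as `Z → 0⁺`;
in particular it is unbounded on `(0,∞)`. -/
theorem kappa_tendsto_atTop (q r : ℝ) (hq : 0 ≤ q) (hr : 0 < r) :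
    Filter.Tendsto (kappa q r) (nhdsWithin 0 (Set.Ioi 0)) Filter.atTop ∧
    ¬ BddAbove (kappa q r '' Set.Ioi 0) := by
  have hC : 0 < (q + r) ^ 2 * r ^ 2 := by positivity
  have hlim : Tendsto (kappa q r) (𝓝[>] 0) atTop := by
    rw [kappa_eq_div]
    exact (tendsto_kappaNum q r).pos_div_nhdsGT_zero hC (tendsto_kappaDen hq hr)
  exact ⟨hlim, hlim.not_bddAbove_image self_mem_nhdsWithin⟩

end
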